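/- Let T = ⟨T, ∈ᵀ, ā⟩ be a finite structure with a distinguished l-tuple ā. Suppose: (i) ∈ᵀ is acyclic and every node has at most k elements (out-degree ≤ k as a digraph with edge x → y iff y ∈ᵀ x); (ii) every node is reachable from some a_i in at most m steps; (iii) letting U be the set of nodes reachable from some a_i in fewer than m steps or having exactly k elements, any two distinct elements of U have distinct extensions in T. Then T embeds into a model A of S_k in such a way that T equals the m-step transitive closure tcl_m^A(ā). -/

import Mathlib

/-- Levels of the transitive closure of a tuple. -/
def tcl {A : Type*} (r : A → A → Prop) {l : ℕ} (a : Fin l → A) : ℕ → Set A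
  | 0 => Set.range a
  | n + 1 => tcl r a n ∪ {v | ∃ u ∈ tcl r a n, r v u}

/-- `r` makes `A` a model of the theory `S_k`. -/
def IsSkModel {A : Type*} (r : A → A → Prop) (k : ℕ) : Prop :=
  (∀ x y : A, (∀ t, r t x ↔ r t y) → x = y) ∧
  (∀ x : A, {t | r t x}.Finite ∧ {t | r t x}.ncard ≤ k) ∧
  (∀ s : Set A, s.Finite → s.ncard ≤ k → ∃ y : A, ∀ t, r t y ↔ t ∈ s) ∧
  (∀ x : A, ¬ Relation.TransGen r x x)
/-!
The model is built from codes in `ℕ`: for each `x : T` an infinite descending chain of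
links `(x, 0) ∋ (x, 1) ∋ ⋯`, and, inductively, every finite set of at most `k` codes. Sets
are well-founded and a link only contains the next link, so `∈` is acyclic; the sets whose
extension is that of a link are left out, which makes the model extensional. A node `x` of
`T` is sent, by well-founded recursion, to the set of the images of its elements, to which
the link `(x, 0)` is added when `x ∉ U`: this keeps the sizes `≤ k` (a node outside `U` has
fewer than `k` elements) and separates the nodes outside `U`, while extensionality on `U`
separates the others. Nodes reached in fewer than `m` steps lie in `U` and so acquire no new
elements, hence the `m`-step closure of `ā` in the model is exactly the image of `T`.
-/

open Encodable Relation

/-- Codes of the elements of the model: `.inl (x, n)` is the `n`-th link of the descending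
chain attached below `x`, `.inr s` the set of the elements coded by `s`. -/
abbrev ChainCode (X : Type*) := (X × ℕ) ⊕ Finset ℕ

namespace ChainCode

variable {X : Type*} [Encodable X]

def members : ChainCode X → Finset ℕ
  | .inl (x, n) => {encode (.inl (x, n + 1) : ChainCode X)}
  | .inr s => s

/-- Excludes the set codes with the extension of a chain link, which would break
extensionality. -/
def Normal (d : ChainCode X) : Prop :=
  ∀ p : X × ℕ, d ≠ .inr (members (.inl p))

theorem eq_of_members_eq {d d' : ChainCode X} (hd : d.Normal) (hd' : d'.Normal)
    (h : d.members = d'.members) : d = d' := by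
  rcases d with ⟨x, n⟩ | s <;> rcases d' with ⟨x', n'⟩ | s'
  · simp only [members, Finset.singleton_inj, encode_inj, Sum.inl.injEq, Prod.mk.injEq,
      Nat.add_right_cancel_iff] at h
    rw [h.1, h.2]
  · exact absurd (congrArg Sum.inr h.symm) (hd' (x, n))
  · exact absurd (congrArg Sum.inr h) (hd (x', n'))
  · exact congrArg Sum.inr h

variable (X) in
inductive Good (k : ℕ) : ℕ → Prop
  | link (hk : 1 ≤ k) (p : X × ℕ) : Good k (encode (.inl p : ChainCode X))
  | set (s : Finset ℕ) (hmem : ∀ c ∈ s, Good k c) (hcard : s.card ≤ k)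
      (hnormal : Normal (.inr s : ChainCode X)) : Good k (encode (.inr s : ChainCode X))

variable {k : ℕ}

theorem Good.exists_encode_eq {c : ℕ} (h : Good X k c) : ∃ d : ChainCode X, encode d = c := by
  cases h <;> exact ⟨_, rfl⟩

theorem good_encode_iff {d : ChainCode X} :
    Good X k (encode d) ↔ (∀ c ∈ d.members, Good X k c) ∧ d.members.card ≤ k ∧ d.Normal := by
  constructor
  · generalize hc : encode d = c
    intro h
    cases h with
    | link hk p =>
      obtain rfl := encode_injective hc
      exact ⟨by simpa [members] using Good.link hk (p.1, p.2 + 1), by simpa [members] using hk,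
        fun _ => Sum.inl_ne_inr⟩
    | set s hmem hcard hnormal =>
      obtain rfl := encode_injective hc
      exact ⟨hmem, hcard, hnormal⟩
  · rintro ⟨hmem, hcard, hnormal⟩
    rcases d with p | s
    · exact Good.link (by simpa [members] using hcard) p
    · exact Good.set s hmem hcard hnormal

end ChainCode

open ChainCode

/-- Hereditarily finite sets of size `≤ k` over infinite descending `∈`-chains, one chain
`(x, 0) ∋ (x, 1) ∋ ⋯` for each `x : X`. -/
def ChainSets (X : Type*) [Encodable X] (k : ℕ) : Type _ :=
  {d : ChainCode X // Good X k (encode d)}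

namespace ChainSets

variable {X : Type*} [Encodable X] {k : ℕ}

def mem (t y : ChainSets X k) : Prop := encode t.1 ∈ y.1.members

theorem exists_encode_eq_of_mem_members {y : ChainSets X k} {c : ℕ} (hc : c ∈ y.1.members) :
    ∃ t : ChainSets X k, encode t.1 = c := by
  obtain ⟨d, rfl⟩ := ((good_encode_iff.1 y.2).1 c hc).exists_encode_eq
  exact ⟨⟨d, (good_encode_iff.1 y.2).1 _ hc⟩, rfl⟩

theorem ext_of_mem (x y : ChainSets X k) (h : ∀ t, mem t x ↔ mem t y) : x = y := by
  have hmembers : x.1.members = y.1.members := by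
    ext c
    constructor <;> intro hc
    · obtain ⟨t, rfl⟩ := exists_encode_eq_of_mem_members hc
      exact (h t).1 hc
    · obtain ⟨t, rfl⟩ := exists_encode_eq_of_mem_members hc
      exact (h t).2 hc
  exact Subtype.ext <| eq_of_members_eq (good_encode_iff.1 x.2).2.2
    (good_encode_iff.1 y.2).2.2 hmembers

theorem encode_val_injective : Function.Injective fun t : ChainSets X k => encode t.1 :=
  fun _ _ h => Subtype.ext (encode_injective h)

theorem finite_and_ncard_le (y : ChainSets X k) :
    {t | mem t y}.Finite ∧ {t | mem t y}.ncard ≤ k := by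
  have hfin : {t | mem t y}.Finite :=
    y.1.members.finite_toSet.preimage (f := fun t : ChainSets X k => encode t.1)
      encode_val_injective.injOn
  refine ⟨hfin, ?_⟩
  calc {t | mem t y}.ncard ≤ (y.1.members : Set ℕ).ncard :=
        Set.ncard_le_ncard_of_injOn _ (fun _ ht => ht) encode_val_injective.injOn
          y.1.members.finite_toSet
    _ = y.1.members.card := Set.ncard_coe_finset _
    _ ≤ k := (good_encode_iff.1 y.2).2.1

theorem exists_normal_members_eq (s : Finset ℕ) :
    ∃ d : ChainCode X, d.Normal ∧ d.members = s := by
  by_cases h : ∃ p : X × ℕ, s = members (.inl p)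
  · obtain ⟨p, rfl⟩ := h
    exact ⟨.inl p, fun _ => Sum.inl_ne_inr, rfl⟩
  · exact ⟨.inr s, fun p hp => h ⟨p, Sum.inr_injective hp⟩, rfl⟩

theorem exists_forall_mem_iff (s : Set (ChainSets X k)) (hfin : s.Finite) (hcard : s.ncard ≤ k) :
    ∃ y, ∀ t, mem t y ↔ t ∈ s := by
  obtain ⟨d, hnormal, hd⟩ :=
    exists_normal_members_eq (X := X) (hfin.toFinset.image fun t => encode t.1)
  have hmem : ∀ t : ChainSets X k, encode t.1 ∈ d.members ↔ t ∈ s := by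
    simp [hd, encode_val_injective.eq_iff]
  have hgood : Good X k (encode d) := by
    refine good_encode_iff.2 ⟨fun c hc => ?_, ?_, hnormal⟩
    · obtain ⟨t, -, rfl⟩ := Finset.mem_image.1 (hd ▸ hc)
      exact t.2
    · calc d.members.card ≤ hfin.toFinset.card := hd ▸ Finset.card_image_le
        _ = s.ncard := (Set.ncard_eq_toFinset_card s hfin).symm
        _ ≤ k := hcard
  exact ⟨⟨d, hgood⟩, hmem⟩

theorem transGen_mem_link {y z : ChainSets X k} (h : TransGen mem y z) {x : X} {n : ℕ}
    (hz : z.1 = .inl (x, n)) : ∃ j, n < j ∧ y.1 = .inl (x, j) := by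
  induction h generalizing n with
  | single hyz =>
    rw [mem, hz] at hyz
    exact ⟨n + 1, n.lt_succ_self, encode_injective (Finset.mem_singleton.1 hyz)⟩
  | tail _ hbz ih =>
    rw [mem, hz] at hbz
    obtain ⟨j, hj, hy⟩ := ih (encode_injective (Finset.mem_singleton.1 hbz))
    exact ⟨j, by omega, hy⟩

theorem not_transGen_mem_self (y : ChainSets X k) : ¬ TransGen mem y y := by
  suffices ∀ c, Good X k c → ∀ y : ChainSets X k, encode y.1 = c → ¬ TransGen mem y y from
    this _ y.2 y rfl
  intro c hc
  induction hc with
  | link _ p =>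
    obtain ⟨x, n⟩ := p
    rintro y hy hyy
    obtain ⟨j, hj, hy'⟩ := transGen_mem_link hyy (encode_injective hy)
    rw [encode_injective hy] at hy'
    simp only [Sum.inl.injEq, Prod.mk.injEq] at hy'
    omega
  | set s _ _ _ ih =>
    rintro y hy hyy
    obtain ⟨b, hyb, hby⟩ := TransGen.tail'_iff.1 hyy
    have hbs : encode b.1 ∈ s := by
      rwa [mem, encode_injective hy] at hby
    exact ih _ hbs b rfl (TransGen.head' hby hyb)

theorem isSkModel : IsSkModel (mem (X := X) (k := k)) k :=
  ⟨ext_of_mem, finite_and_ncard_le, exists_forall_mem_iff, not_transGen_mem_self⟩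

end ChainSets

theorem Finite.wellFounded_of_not_transGen_self {α : Type*} [Finite α] {r : α → α → Prop}
    (h : ∀ x, ¬ TransGen r x x) : WellFounded r :=
  haveI : Std.Irrefl (TransGen r) := ⟨h⟩
  Subrelation.wf TransGen.single (Finite.wellFounded_of_trans_of_irrefl _)

theorem tcl_comp_eq_image {α β : Type*} {r : α → α → Prop} {s : β → β → Prop} {f : α → β}
    (hf : ∀ x y, r x y ↔ s (f x) (f y)) {l : ℕ} (a : Fin l → α) {m : ℕ}
    (hclosed : ∀ n < m, ∀ u ∈ tcl r a n, ∀ v, s v (f u) → v ∈ Set.range f) :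
    ∀ n ≤ m, tcl s (f ∘ a) n = f '' tcl r a n := by
  intro n hn
  induction n with
  | zero => exact Set.range_comp f a
  | succ n ih =>
    simp only [tcl, ih (by omega), Set.image_union]
    congr 1
    ext v
    constructor
    · rintro ⟨_, ⟨u, hu, rfl⟩, hvu⟩
      obtain ⟨t, rfl⟩ := hclosed n (by omega) u hu v hvu
      exact ⟨t, ⟨u, hu, (hf t u).2 hvu⟩, rfl⟩
    · rintro ⟨t, ⟨u, hu, htu⟩, rfl⟩
      exact ⟨f u, ⟨u, hu, rfl⟩, (hf t u).1 htu⟩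

section Embedding

variable {T : Type*} [Encodable T] [Finite T] (r : T → T → Prop) (U : Set T)
  (wf : WellFounded r)

noncomputable def embedSet : T → Finset ℕ :=
  open Classical in
  wf.fix fun x rec =>
    ((Set.toFinite {t | r t x}).toFinset.attach.image fun t =>
        encode (.inr (rec t.1 ((Set.Finite.mem_toFinset (a := t.1) _).1 t.2)) : ChainCode T)) ∪
      if x ∈ U then ∅ else {encode (.inl (x, 0) : ChainCode T)}

variable {r U}

theorem mem_embedSet {x : T} {c : ℕ} :
    c ∈ embedSet r U wf x ↔ (∃ t, r t x ∧ encode (.inr (embedSet r U wf t) : ChainCode T) = c) ∨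
      (x ∉ U ∧ c = encode (.inl (x, 0) : ChainCode T)) := by
  rw [embedSet, WellFounded.fix_eq, ← embedSet]
  by_cases hx : x ∈ U <;> simp [hx, -encode_inr, -encode_inl, or_comm]

theorem encode_inr_embedSet_mem_embedSet_iff
    (hinj : Function.Injective (embedSet r U wf)) {x y : T} :
    encode (.inr (embedSet r U wf x) : ChainCode T) ∈ embedSet r U wf y ↔ r x y := by
  simp [mem_embedSet, hinj.eq_iff, -encode_inr, -encode_inl]

theorem exists_eq_embedSet_of_mem {y : T} (hy : y ∈ U) {d : ChainCode T}
    (hd : encode d ∈ embedSet r U wf y) : ∃ t, r t y ∧ d = .inr (embedSet r U wf t) := by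
  simpa [mem_embedSet, hy, eq_comm, -encode_inr, -encode_inl] using hd

open Classical in
theorem card_embedSet_le (x : T) :
    (embedSet r U wf x).card ≤ {t | r t x}.ncard + if x ∈ U then 0 else 1 := by
  rw [embedSet, WellFounded.fix_eq, ← embedSet]
  refine (Finset.card_union_le _ _).trans (add_le_add ?_ ?_)
  · rw [Set.ncard_eq_toFinset_card _ (Set.toFinite _)]
    exact Finset.card_image_le.trans Finset.card_attach.le
  · split_ifs <;> simp

theorem good_inr_embedSet {k : ℕ} (hdeg : ∀ x, {t | r t x}.ncard ≤ k)
    (hsmall : ∀ x ∉ U, {t | r t x}.ncard < k) (x : T) :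
    Good T k (encode (.inr (embedSet r U wf x) : ChainCode T)) := by
  induction x using wf.induction with
  | _ x ih =>
  refine good_encode_iff.2 ⟨fun c hc => ?_, ?_, fun p hp => ?_⟩
  · rcases (mem_embedSet wf).1 hc with ⟨t, ht, rfl⟩ | ⟨hx, rfl⟩
    · exact ih t ht
    · exact Good.link (by have := hsmall x hx; omega) _
  · have hcard := card_embedSet_le (U := U) wf x
    by_cases hx : x ∈ U
    · simp only [hx, if_true, add_zero] at hcard
      exact hcard.trans (hdeg x)
    · simp only [hx, if_false] at hcard
      exact hcard.trans (hsmall x hx)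
  · have hlink : encode (.inl (p.1, p.2 + 1) : ChainCode T) ∈ embedSet r U wf x := by
      rw [Sum.inr_injective hp]
      exact Finset.mem_singleton_self _
    simpa [-encode_inr, -encode_inl] using (mem_embedSet wf).1 hlink

theorem embedSet_injective
    (hext : ∀ u ∈ U, ∀ u' ∈ U, u ≠ u' → {t | r t u} ≠ {t | r t u'}) :
    Function.Injective (embedSet r U wf) := by
  intro x
  induction x using wf.induction with
  | _ x ih =>
  intro y hxy
  have hlink {u v : T} (huv : embedSet r U wf u = embedSet r U wf v) (hu : u ∉ U) : u = v := by
    have := huv ▸ (mem_embedSet wf).2 (Or.inr ⟨hu, rfl⟩)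
    simp only [mem_embedSet, encode_inj, reduceCtorEq, and_false, exists_false,
      false_or, Sum.inl.injEq, Prod.mk.injEq, and_true] at this
    exact this.2
  by_cases hx : x ∈ U
  · by_cases hy : y ∈ U
    · by_contra hne
      refine hext x hx y hy hne (Set.ext fun t => ⟨fun ht => ?_, fun ht => ?_⟩)
      · obtain ⟨t', ht', he⟩ := exists_eq_embedSet_of_mem wf hy
          (hxy ▸ (mem_embedSet wf).2 (Or.inl ⟨t, ht, rfl⟩))
        rwa [ih t ht (Sum.inr_injective he)]
      · obtain ⟨t', ht', he⟩ := exists_eq_embedSet_of_mem wf hx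
          (hxy ▸ (mem_embedSet wf).2 (Or.inl ⟨t, ht, rfl⟩))
        rwa [← ih t' ht' (Sum.inr_injective he).symm]
    · exact (hlink hxy.symm hy).symm
  · exact hlink hxy hx

end Embedding

/-- A finite structure `⟨T, ∈ᵀ, ā⟩` which is acyclic with out-degrees `≤ k`, in which
every node is reachable from the tuple in at most `m` steps, and which is extensional
with respect to the set `U` of nodes reachable in fewer than `m` steps or of
out-degree exactly `k`, embeds into a model `A ⊨ S_k` so that its image is
`tcl_m^A(ā)`. -/
theorem tcl_structure_embeds (k m : ℕ) {T : Type} [Finite T]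
    (rT : T → T → Prop) {l : ℕ} (a : Fin l → T)
    (hacyc : ∀ x : T, ¬ Relation.TransGen rT x x)
    (hdeg : ∀ x : T, {t | rT t x}.ncard ≤ k)
    (hreach : ∀ x : T, x ∈ tcl rT a m)
    (hext : ∀ u ∈ {u : T | (∃ m' < m, u ∈ tcl rT a m') ∨ {t | rT t u}.ncard = k},
            ∀ u' ∈ {u : T | (∃ m' < m, u ∈ tcl rT a m') ∨ {t | rT t u}.ncard = k},
            u ≠ u' → {t | rT t u} ≠ {t | rT t u'}) :
    ∃ (A : Type) (rA : A → A → Prop) (f : T → A),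
      IsSkModel rA k ∧ Function.Injective f ∧
      (∀ x y : T, rT x y ↔ rA (f x) (f y)) ∧
      Set.range f = tcl rA (f ∘ a) m := by
  let _ : Encodable T := Encodable.ofCountable T
  have wf : WellFounded rT := Finite.wellFounded_of_not_transGen_self hacyc
  set U : Set T := {u | (∃ m' < m, u ∈ tcl rT a m') ∨ {t | rT t u}.ncard = k}
  have hsmall : ∀ x ∉ U, {t | rT t x}.ncard < k :=
    fun x hx => (hdeg x).lt_of_ne fun h => hx (Or.inr h)
  have hinj := embedSet_injective wf hext
  let f : T → ChainSets T k :=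
    fun x => ⟨.inr (embedSet rT U wf x), good_inr_embedSet wf hdeg hsmall x⟩
  have hf : ∀ x y, rT x y ↔ ChainSets.mem (f x) (f y) :=
    fun x y => (encode_inr_embedSet_mem_embedSet_iff wf hinj).symm
  have hclosed : ∀ n < m, ∀ u ∈ tcl rT a n, ∀ v, ChainSets.mem v (f u) → v ∈ Set.range f := by
    intro n hn u hu v hv
    obtain ⟨t, -, ht⟩ := exists_eq_embedSet_of_mem wf (Or.inl ⟨n, hn, hu⟩) hv
    exact ⟨t, Subtype.ext ht.symm⟩
  refine ⟨ChainSets T k, ChainSets.mem, f, ChainSets.isSkModel,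
    fun x y h => hinj (Sum.inr_injective (congrArg Subtype.val h)), hf, ?_⟩
  rw [tcl_comp_eq_image hf a hclosed m le_rfl, Set.eq_univ_of_forall hreach, Set.image_univ]
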